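/- arXiv:2104.06319 — 7 statements merged into one kernel-verified Lean document; each statement's English description precedes it below -/
import Mathlib

section
/- Let m, ω : ℝ → ℝ be continuous, let y : ℝ → ℝ be differentiable, and let F : ℝ → ℝ be continuously differentiable, such that t ↦ m(t)F(y(t))F′(y(t))y′(t) is differentiable. Suppose that for all t one has (d/dt)(m(t)F(y(t))F′(y(t))y′(t)) = m(t)(F′(y(t))²y′(t)² − F(y(t))²ω(t)²). Then at every point t where F(y(t)) ≠ 0 and t ↦ m(t)F′(y(t))y′(t) is differentiable, (d/dt)(m(t)F′(y(t))y′(t)) + m(t)ω(t)²F(y(t)) = 0. -/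
/-! Writing the coefficient of `Q dQ` as the product of `h = F ∘ y` with `g = m F′(y) y′`, the
product rule turns closedness into `h′ g + h g′ = m (F′(y) y′)² − m h² ω²`. Since `h′ = F′(y) y′`,
the term `h′ g` cancels the first summand on the right, leaving `h (g′ + m ω² h) = 0`; divide by
`h ≠ 0`. -/

theorem deriv_eq_of_deriv_mul_eq {𝕜 : Type*} [NontriviallyNormedField 𝕜] {h g : 𝕜 → 𝕜}
    {t c : 𝕜} (hh : DifferentiableAt 𝕜 h t) (hg : DifferentiableAt 𝕜 g t) (hne : h t ≠ 0)
    (hprod : deriv (fun s => h s * g s) t = deriv h t * g t + h t * c) :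
    deriv g t = c := by
  rw [deriv_fun_mul hh hg] at hprod
  exact mul_left_cancel₀ hne (add_left_cancel hprod)

theorem eisenhart_duval_closed_one_form_generalized_general
    (m ω y F : ℝ → ℝ)
    (hy : Differentiable ℝ y) (hF : ContDiff ℝ 1 F)
    (hclosed : ∀ t, deriv (fun s => m s * F (y s) * deriv F (y s) * deriv y s) t
      = m t * ((deriv F (y t)) ^ 2 * (deriv y t) ^ 2 - (F (y t)) ^ 2 * (ω t) ^ 2)) :
    ∀ t, F (y t) ≠ 0 → DifferentiableAt ℝ (fun s => m s * deriv F (y s) * deriv y s) t →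
      deriv (fun s => m s * deriv F (y s) * deriv y s) t + m t * (ω t) ^ 2 * F (y t) = 0 := by
  intro t hFy hg
  have hFd : Differentiable ℝ F := hF.differentiable one_ne_zero
  have hh : DifferentiableAt ℝ (fun s => F (y s)) t := (hFd (y t)).comp t (hy t)
  have hderiv_h : deriv (fun s => F (y s)) t = deriv F (y t) * deriv y t :=
    deriv_comp t hFd.differentiableAt (hy t)
  have hprod : deriv (fun s => F (y s) * (m s * deriv F (y s) * deriv y s)) t
      = deriv (fun s => F (y s)) t * (m t * deriv F (y t) * deriv y t)
        + F (y t) * (-(m t * (ω t) ^ 2 * F (y t))) := by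
    have hcoeff : (fun s => F (y s) * (m s * deriv F (y s) * deriv y s))
        = fun s => m s * F (y s) * deriv F (y s) * deriv y s := by
      funext s; ring
    rw [hcoeff, hclosed t, hderiv_h]
    ring
  rw [deriv_eq_of_deriv_mul_eq hh hg hFy hprod]
  ring

/-- Closedness of the generalized one-form
Λ = m F(y)F′(y)y′ Q dQ + (1/2) m Q² (F′(y)²y′² − F(y)²ω²) dt,
i.e. (d/dt)(m F(y)F′(y)y′) = m (F′(y)²y′² − F(y)²ω²), implies
(d/dt)(m F′(y)y′) + m ω² F(y) = 0 wherever F(y) ≠ 0 and m F′(y) y′ is differentiable. -/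
theorem eisenhart_duval_closed_one_form_generalized
    (m ω y F : ℝ → ℝ)
    (hm : Continuous m) (hω : Continuous ω)
    (hy : Differentiable ℝ y) (hF : ContDiff ℝ 1 F)
    (hdiff : Differentiable ℝ (fun t => m t * F (y t) * deriv F (y t) * deriv y t))
    (hclosed : ∀ t, deriv (fun s => m s * F (y s) * deriv F (y s) * deriv y s) t
      = m t * ((deriv F (y t)) ^ 2 * (deriv y t) ^ 2 - (F (y t)) ^ 2 * (ω t) ^ 2)) :
    ∀ t, F (y t) ≠ 0 → DifferentiableAt ℝ (fun s => m s * deriv F (y s) * deriv y s) t →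
      deriv (fun s => m s * deriv F (y s) * deriv y s) t + m t * (ω t) ^ 2 * F (y t) = 0 :=
  eisenhart_duval_closed_one_form_generalized_general m ω y F hy hF hclosed
end

section
/- Let ω : ℝ → ℝ be differentiable and nonvanishing and let x, y : ℝ → ℝ be twice differentiable functions satisfying the parametric Kapitza equations (d/dt)(x′/ω) + ω x + ω y = 0 and (d/dt)(y′/ω) + ω y − ω x = 0. Then I₁(t) = (1/2)[(x′(t)/ω(t))² − (y′(t)/ω(t))²] + (1/2)(x(t)² − y(t)²) + x(t)y(t) is constant in t. -/
/-! In the variables `u = x′/ω`, `v = y′/ω` the Kapitza system is the first-order system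
`x′ = ω u`, `y′ = ω v`, `u′ = -ω (x + y)`, `v′ = -ω (y - x)`, and differentiating `I₁` along it
gives `ω` times an expression that cancels identically. -/

noncomputable def kapitzaFirstIntegral (x y u v : ℝ → ℝ) (t : ℝ) : ℝ :=
  (1 / 2) * ((u t) ^ 2 - (v t) ^ 2) + (1 / 2) * ((x t) ^ 2 - (y t) ^ 2) + x t * y t

section FirstOrderSystem

variable {ω x y u v : ℝ → ℝ}

theorem hasDerivAt_kapitzaFirstIntegral {t : ℝ}
    (hx : HasDerivAt x (ω t * u t) t) (hy : HasDerivAt y (ω t * v t) t)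
    (hu : HasDerivAt u (-(ω t * (x t + y t))) t) (hv : HasDerivAt v (-(ω t * (y t - x t))) t) :
    HasDerivAt (kapitzaFirstIntegral x y u v) 0 t := by
  have h := ((((hu.pow 2).sub (hv.pow 2)).const_mul (1 / 2 : ℝ)).add
    (((hx.pow 2).sub (hy.pow 2)).const_mul (1 / 2 : ℝ))).add (hx.mul hy)
  exact h.congr_deriv (by push_cast; ring)

theorem kapitzaFirstIntegral_eq
    (hx : ∀ t, HasDerivAt x (ω t * u t) t) (hy : ∀ t, HasDerivAt y (ω t * v t) t)
    (hu : ∀ t, HasDerivAt u (-(ω t * (x t + y t))) t)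
    (hv : ∀ t, HasDerivAt v (-(ω t * (y t - x t))) t) (t₁ t₂ : ℝ) :
    kapitzaFirstIntegral x y u v t₁ = kapitzaFirstIntegral x y u v t₂ := by
  have hI t := hasDerivAt_kapitzaFirstIntegral (hx t) (hy t) (hu t) (hv t)
  exact is_const_of_deriv_eq_zero (fun t => (hI t).differentiableAt) (fun t => (hI t).deriv) t₁ t₂

end FirstOrderSystem

/-- Along solutions of the parametric Kapitza equations,
I₁ = (1/2)[(x′/ω)² − (y′/ω)²] + (1/2)(x² − y²) + xy is constant. -/
theorem parametric_kapitza_first_integral_I1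
    (ω x y : ℝ → ℝ)
    (hω : Differentiable ℝ ω) (hω0 : ∀ t, ω t ≠ 0)
    (hx : Differentiable ℝ x) (hx' : Differentiable ℝ (deriv x))
    (hy : Differentiable ℝ y) (hy' : Differentiable ℝ (deriv y))
    (heq1 : ∀ t, deriv (fun s => deriv x s / ω s) t + ω t * x t + ω t * y t = 0)
    (heq2 : ∀ t, deriv (fun s => deriv y s / ω s) t + ω t * y t - ω t * x t = 0) :
    ∀ t₁ t₂ : ℝ,
      (1 / 2) * ((deriv x t₁ / ω t₁) ^ 2 - (deriv y t₁ / ω t₁) ^ 2)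
        + (1 / 2) * ((x t₁) ^ 2 - (y t₁) ^ 2) + x t₁ * y t₁
      = (1 / 2) * ((deriv x t₂ / ω t₂) ^ 2 - (deriv y t₂ / ω t₂) ^ 2)
        + (1 / 2) * ((x t₂) ^ 2 - (y t₂) ^ 2) + x t₂ * y t₂ := by
  have hu : Differentiable ℝ fun s => deriv x s / ω s := hx'.div hω hω0
  have hv : Differentiable ℝ fun s => deriv y s / ω s := hy'.div hω hω0
  refine kapitzaFirstIntegral_eq (ω := ω) (fun t => ?_) (fun t => ?_) (fun t => ?_) (fun t => ?_)
  · simpa only [mul_div_cancel₀ _ (hω0 t)] using (hx t).hasDerivAt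
  · simpa only [mul_div_cancel₀ _ (hω0 t)] using (hy t).hasDerivAt
  · exact (hu t).hasDerivAt.congr_deriv (by linarith [heq1 t])
  · exact (hv t).hasDerivAt.congr_deriv (by linarith [heq2 t])
end

section
/- Let ω : ℝ → ℝ be differentiable and nonvanishing and let x, y : ℝ → ℝ be twice differentiable functions satisfying the parametric Kapitza equations (d/dt)(x′/ω) + ω x + ω y = 0 and (d/dt)(y′/ω) + ω y − ω x = 0. Then I₂(t) = (x′(t)/ω(t))·(y′(t)/ω(t)) − (1/2)(x(t)² − y(t)²) + x(t)y(t) is constant in t. -/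
/-!
Writing `p = x′/ω` and `q = y′/ω`, the Kapitza equations become the first-order system
`x′ = ω p`, `y′ = ω q`, `p′ = -ω (x + y)`, `q′ = -ω (y - x)`. Along it the derivative of
`I₂ = p q - (x² - y²)/2 + x y` is `ω` times an expression that cancels identically, so `I₂`
has zero derivative everywhere and is therefore constant.
-/

noncomputable def kapitzaI₂ (x y p q : ℝ) : ℝ :=
  p * q - (1 / 2) * (x ^ 2 - y ^ 2) + x * y

section FirstOrder

variable {ω x y p q : ℝ → ℝ}

theorem hasDerivAt_kapitzaI₂_of_firstOrder {t : ℝ}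
    (hx : HasDerivAt x (ω t * p t) t) (hy : HasDerivAt y (ω t * q t) t)
    (hp : HasDerivAt p (-(ω t * (x t + y t))) t) (hq : HasDerivAt q (-(ω t * (y t - x t))) t) :
    HasDerivAt (fun s => kapitzaI₂ (x s) (y s) (p s) (q s)) 0 t := by
  have h : HasDerivAt (fun s => kapitzaI₂ (x s) (y s) (p s) (q s))
      (-(ω t * (x t + y t)) * q t + p t * -(ω t * (y t - x t))
        - (1 / 2) * ((2 : ℕ) * x t ^ 1 * (ω t * p t) - (2 : ℕ) * y t ^ 1 * (ω t * q t))
        + (ω t * p t * y t + x t * (ω t * q t))) t :=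
    ((hp.mul hq).sub (((hx.pow 2).sub (hy.pow 2)).const_mul (1 / 2))).add (hx.mul hy)
  convert h using 1
  push_cast
  ring

theorem kapitzaI₂_eq_of_firstOrder
    (hx : ∀ t, HasDerivAt x (ω t * p t) t) (hy : ∀ t, HasDerivAt y (ω t * q t) t)
    (hp : ∀ t, HasDerivAt p (-(ω t * (x t + y t))) t)
    (hq : ∀ t, HasDerivAt q (-(ω t * (y t - x t))) t) (t₁ t₂ : ℝ) :
    kapitzaI₂ (x t₁) (y t₁) (p t₁) (q t₁) = kapitzaI₂ (x t₂) (y t₂) (p t₂) (q t₂) :=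
  is_const_of_deriv_eq_zero
    (fun t => (hasDerivAt_kapitzaI₂_of_firstOrder (hx t) (hy t) (hp t) (hq t)).differentiableAt)
    (fun t => (hasDerivAt_kapitzaI₂_of_firstOrder (hx t) (hy t) (hp t) (hq t)).deriv) t₁ t₂

end FirstOrder

theorem hasDerivAt_mul_deriv_div {ω x : ℝ → ℝ} {t : ℝ} (hx : DifferentiableAt ℝ x t)
    (hω0 : ω t ≠ 0) : HasDerivAt x (ω t * (deriv x t / ω t)) t := by
  rw [mul_div_cancel₀ _ hω0]
  exact hx.hasDerivAt

theorem hasDerivAt_of_deriv_add_eq_zero {f : ℝ → ℝ} {t c : ℝ} (hf : DifferentiableAt ℝ f t)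
    (h : deriv f t + c = 0) : HasDerivAt f (-c) t := by
  rw [← eq_neg_of_add_eq_zero_left h]
  exact hf.hasDerivAt

/-- Along solutions of the parametric Kapitza equations,
I₂ = (x′/ω)(y′/ω) − (1/2)(x² − y²) + xy is constant. -/
theorem parametric_kapitza_first_integral_I2
    (ω x y : ℝ → ℝ)
    (hω : Differentiable ℝ ω) (hω0 : ∀ t, ω t ≠ 0)
    (hx : Differentiable ℝ x) (hx' : Differentiable ℝ (deriv x))
    (hy : Differentiable ℝ y) (hy' : Differentiable ℝ (deriv y))
    (heq1 : ∀ t, deriv (fun s => deriv x s / ω s) t + ω t * x t + ω t * y t = 0)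
    (heq2 : ∀ t, deriv (fun s => deriv y s / ω s) t + ω t * y t - ω t * x t = 0) :
    ∀ t₁ t₂ : ℝ,
      (deriv x t₁ / ω t₁) * (deriv y t₁ / ω t₁)
        - (1 / 2) * ((x t₁) ^ 2 - (y t₁) ^ 2) + x t₁ * y t₁
      = (deriv x t₂ / ω t₂) * (deriv y t₂ / ω t₂)
        - (1 / 2) * ((x t₂) ^ 2 - (y t₂) ^ 2) + x t₂ * y t₂ := by
  have hp : Differentiable ℝ fun s => deriv x s / ω s := hx'.div hω hω0
  have hq : Differentiable ℝ fun s => deriv y s / ω s := hy'.div hω hω0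
  exact kapitzaI₂_eq_of_firstOrder
    (fun t => hasDerivAt_mul_deriv_div (hx t) (hω0 t))
    (fun t => hasDerivAt_mul_deriv_div (hy t) (hω0 t))
    (fun t => hasDerivAt_of_deriv_add_eq_zero (hp t) <| by
      rw [mul_add, ← add_assoc]; exact heq1 t)
    (fun t => hasDerivAt_of_deriv_add_eq_zero (hq t) <| by
      rw [mul_sub, ← add_sub_assoc]; exact heq2 t)
end

section
/- Let ω : ℝ → ℝ be differentiable and nonvanishing and let x, y : ℝ → ℝ be twice differentiable functions satisfying the generalized (monkey-saddle) parametric Kapitza equations (d/dt)(x′/ω) + ω(x² − y²) + 2ω x y = 0 and (d/dt)(y′/ω) − ω(x² − y²) + 2ω x y = 0. Then I₁(t) = (1/2)[(x′(t)/ω(t))² − (y′(t)/ω(t))²] + ((1/3)x(t)³ − x(t)y(t)²) + (x(t)²y(t) − (1/3)y(t)³) is constant in t. -/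
/-!
With `u = x'/ω` and `v = y'/ω` the equations read `u' = -ω ∂ₓW`, `v' = ω ∂ᵧW` for the potential
`W = (x³/3 - xy²) + (x²y - y³/3)`, while `x' = ω u`, `y' = ω v`. Hence along a solution
`d/dt (½(u² - v²) + W) = u u' - v v' + ∂ₓW x' + ∂ᵧW y' = 0`: the factor `ω` cancels.
-/

/-- `I₁` as a function of `(x'/ω, y'/ω, x, y)`. -/
noncomputable def monkeySaddleI₁ (u v x y : ℝ) : ℝ :=
  (1 / 2) * (u ^ 2 - v ^ 2) + ((1 / 3) * x ^ 3 - x * y ^ 2) + (x ^ 2 * y - (1 / 3) * y ^ 3)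

theorem HasDerivAt.monkeySaddleI₁ {u v x y : ℝ → ℝ} {u' v' x' y' t : ℝ}
    (hu : HasDerivAt u u' t) (hv : HasDerivAt v v' t)
    (hx : HasDerivAt x x' t) (hy : HasDerivAt y y' t) :
    HasDerivAt (fun s => monkeySaddleI₁ (u s) (v s) (x s) (y s))
      (u t * u' - v t * v' + (x t ^ 2 - y t ^ 2 + 2 * x t * y t) * x'
        + (x t ^ 2 - y t ^ 2 - 2 * x t * y t) * y') t := by
  have h := ((((hu.pow 2).sub (hv.pow 2)).const_mul (1 / 2 : ℝ)).add
    (((hx.pow 3).const_mul (1 / 3 : ℝ)).sub (hx.mul (hy.pow 2)))).add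
    (((hx.pow 2).mul hy).sub ((hy.pow 3).const_mul (1 / 3 : ℝ)))
  refine h.congr_deriv ?_
  push_cast [Pi.pow_apply]
  ring

theorem hasDerivAt_monkeySaddleI₁_eq_zero {ω u v x y : ℝ → ℝ} {t : ℝ}
    (hu : HasDerivAt u (-(ω t * (x t ^ 2 - y t ^ 2 + 2 * x t * y t))) t)
    (hv : HasDerivAt v (ω t * (x t ^ 2 - y t ^ 2 - 2 * x t * y t)) t)
    (hx : HasDerivAt x (ω t * u t) t) (hy : HasDerivAt y (ω t * v t) t) :
    HasDerivAt (fun s => monkeySaddleI₁ (u s) (v s) (x s) (y s)) 0 t :=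
  (hu.monkeySaddleI₁ hv hx hy).congr_deriv (by ring)

/-- Along solutions of the generalized (monkey-saddle) parametric Kapitza
equations, I₁ = (1/2)[(x′/ω)² − (y′/ω)²] + ((1/3)x³ − xy²) + (x²y − (1/3)y³) is constant. -/
theorem monkey_saddle_parametric_kapitza_first_integral_I1
    (ω x y : ℝ → ℝ)
    (hω : Differentiable ℝ ω) (hω0 : ∀ t, ω t ≠ 0)
    (hx : Differentiable ℝ x) (hx' : Differentiable ℝ (deriv x))
    (hy : Differentiable ℝ y) (hy' : Differentiable ℝ (deriv y))
    (heq1 : ∀ t, deriv (fun s => deriv x s / ω s) t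
      + ω t * ((x t) ^ 2 - (y t) ^ 2) + 2 * ω t * x t * y t = 0)
    (heq2 : ∀ t, deriv (fun s => deriv y s / ω s) t
      - ω t * ((x t) ^ 2 - (y t) ^ 2) + 2 * ω t * x t * y t = 0) :
    ∀ t₁ t₂ : ℝ,
      (1 / 2) * ((deriv x t₁ / ω t₁) ^ 2 - (deriv y t₁ / ω t₁) ^ 2)
        + ((1 / 3) * (x t₁) ^ 3 - x t₁ * (y t₁) ^ 2)
        + ((x t₁) ^ 2 * y t₁ - (1 / 3) * (y t₁) ^ 3)
      = (1 / 2) * ((deriv x t₂ / ω t₂) ^ 2 - (deriv y t₂ / ω t₂) ^ 2)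
        + ((1 / 3) * (x t₂) ^ 3 - x t₂ * (y t₂) ^ 2)
        + ((x t₂) ^ 2 * y t₂ - (1 / 3) * (y t₂) ^ 3) := by
  set u : ℝ → ℝ := fun s => deriv x s / ω s
  set v : ℝ → ℝ := fun s => deriv y s / ω s
  have hu : Differentiable ℝ u := hx'.div hω hω0
  have hv : Differentiable ℝ v := hy'.div hω hω0
  have hI : ∀ t, HasDerivAt (fun s => monkeySaddleI₁ (u s) (v s) (x s) (y s)) 0 t := by
    intro t
    refine hasDerivAt_monkeySaddleI₁_eq_zero (ω := ω) ?_ ?_ ?_ ?_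
    · exact (hu t).hasDerivAt.congr_deriv (by linarith [heq1 t])
    · exact (hv t).hasDerivAt.congr_deriv (by linarith [heq2 t])
    · exact (hx t).hasDerivAt.congr_deriv (mul_div_cancel₀ _ (hω0 t)).symm
    · exact (hy t).hasDerivAt.congr_deriv (mul_div_cancel₀ _ (hω0 t)).symm
  exact is_const_of_deriv_eq_zero (fun t => (hI t).differentiableAt) (fun t => (hI t).deriv)
end

section
/- Let a, b, Ω ∈ ℝ and suppose a + b·cos(Ω t) ≠ 0 for all t in an interval J. Let x : J → ℝ be twice differentiable and satisfy the modulated Mathieu equation x″(t) + [Ω b sin(Ω t) / (2(a + b cos(Ω t)))]·x′(t) + (a + b cos(Ω t))·x(t) = 0 on J. Then I(t) = (1/2)·[x′(t)²/(a + b cos(Ω t)) + x(t)²] is constant on J. -/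
/-!
With `ρ = a + b cos(Ω t)` the equation reads `x'' - ρ' x' / (2ρ) + ρ x = 0`. Differentiating
`I = (x'^2 / ρ + x^2) / 2` gives `x' x'' / ρ - ρ' x'^2 / (2ρ^2) + x x'`, and substituting
`x''` from the equation makes this vanish identically. A function with zero derivative on an
interval is constant.
-/

theorem Set.OrdConnected.eq_of_hasDerivAt_eq_zero {J : Set ℝ} (hJ : J.OrdConnected) {f : ℝ → ℝ}
    (hf : ∀ t ∈ J, HasDerivAt f 0 t) {t₁ t₂ : ℝ} (ht₁ : t₁ ∈ J) (ht₂ : t₂ ∈ J) :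
    f t₁ = f t₂ := by
  have h := hJ.convex.norm_image_sub_le_of_norm_hasDerivWithin_le
    (fun t ht => (hf t ht).hasDerivWithinAt) (fun _ _ => norm_zero.le) ht₂ ht₁
  rw [zero_mul, norm_le_zero_iff, sub_eq_zero] at h
  exact h

theorem hasDerivAt_oscillator_energy {ρ x x' : ℝ → ℝ} {ρ' x'' t : ℝ}
    (hρ : HasDerivAt ρ ρ' t) (hρt : ρ t ≠ 0) (hx : HasDerivAt x (x' t) t)
    (hx' : HasDerivAt x' x'' t) (hode : x'' - ρ' / (2 * ρ t) * x' t + ρ t * x t = 0) :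
    HasDerivAt (fun s => 1 / 2 * (x' s ^ 2 / ρ s + x s ^ 2)) 0 t := by
  refine ((((hx'.pow 2).div hρ hρt).add (hx.pow 2)).const_mul (1 / 2)).congr_deriv ?_
  obtain rfl : x'' = ρ' / (2 * ρ t) * x' t - ρ t * x t := by linear_combination hode
  simp only [Pi.pow_apply]
  field_simp
  ring

theorem hasDerivAt_mathieu_modulation (a b Ω t : ℝ) :
    HasDerivAt (fun s => a + b * Real.cos (Ω * s)) (-(Ω * b * Real.sin (Ω * t))) t := by
  refine ((((hasDerivAt_id t).const_mul Ω).cos.const_mul b).const_add a).congr_deriv ?_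
  simp only [id, mul_one]
  ring

/-- Along any solution of the modulated Mathieu equation
x″ + [Ωb sin(Ωt)/(2(a + b cos Ωt))]·x′ + (a + b cos Ωt)·x = 0 on an interval J
where a + b cos(Ωt) ≠ 0, the quantity I = (1/2)[x′²/(a + b cos Ωt) + x²] is constant. -/
theorem modulated_mathieu_first_integral
    (a b Ω : ℝ) (J : Set ℝ) (hJ : J.OrdConnected)
    (hne : ∀ t ∈ J, a + b * Real.cos (Ω * t) ≠ 0)
    (x x' x'' : ℝ → ℝ)
    (hx : ∀ t ∈ J, HasDerivAt x (x' t) t)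
    (hx' : ∀ t ∈ J, HasDerivAt x' (x'' t) t)
    (hode : ∀ t ∈ J, x'' t
      + (Ω * b * Real.sin (Ω * t) / (2 * (a + b * Real.cos (Ω * t)))) * x' t
      + (a + b * Real.cos (Ω * t)) * x t = 0) :
    ∀ t₁ ∈ J, ∀ t₂ ∈ J,
      (1 / 2) * ((x' t₁) ^ 2 / (a + b * Real.cos (Ω * t₁)) + (x t₁) ^ 2)
      = (1 / 2) * ((x' t₂) ^ 2 / (a + b * Real.cos (Ω * t₂)) + (x t₂) ^ 2) := by
  intro t₁ ht₁ t₂ ht₂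
  refine hJ.eq_of_hasDerivAt_eq_zero (fun t ht => ?_) ht₁ ht₂
    (f := fun s => 1 / 2 * (x' s ^ 2 / (a + b * Real.cos (Ω * s)) + x s ^ 2))
  refine hasDerivAt_oscillator_energy (hasDerivAt_mathieu_modulation a b Ω t) (hne t ht)
    (hx t ht) (hx' t ht) ?_
  rw [neg_div, neg_mul, sub_neg_eq_add]
  exact hode t ht
end

section
/- Let a, q ∈ ℝ and let J be an interval on which a + 2q·cos(2t) > 0. Let x, y : J → ℝ be twice differentiable and satisfy the nonlinear Mathieu–Kapitza system x″(t) + [2q sin(2t)/(a + 2q cos(2t))]·x′(t) + (a + 2q cos(2t))·(x(t)² − y(t)² + 2x(t)y(t)) = 0 and y″(t) + [2q sin(2t)/(a + 2q cos(2t))]·y′(t) − (a + 2q cos(2t))·(x(t)² − y(t)² − 2x(t)y(t)) = 0 on J. Then I(t) = (1/2)·(x′(t)² − y′(t)²)/(a + 2q cos(2t)) + ((1/3)x(t)³ − x(t)y(t)²) + (x(t)²y(t) − (1/3)y(t)³) is constant on J. -/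
/-!
Write `w = a + 2q cos 2t`. Its derivative is `w' = -4q sin 2t`, so the damping coefficient
`2q sin 2t / w` equals `-w' / (2w)`; with `ω = √w` the system reads `(x′/ω)′ + ω ∂ₓV = 0`,
`(y′/ω)′ − ω ∂ᵧV = 0` for the monkey saddle `V = Re(z³)/3 + Im(z³)/3`, `z = x + iy`.
Then `d/dt (x′²/(2w)) = −∂ₓV · x′` and `d/dt (y′²/(2w)) = ∂ᵧV · y′`, so the energy
`(x′² − y′²)/(2w) + V(x, y)` has zero derivative on the interval `J`, hence is constant there.
-/

open Real

theorem Set.OrdConnected.eq_of_hasDerivAt_eq_zero_s18 {E : Type*} [NormedAddCommGroup E]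
    [NormedSpace ℝ E] {f : ℝ → E} {s : Set ℝ} (hs : s.OrdConnected)
    (hf : ∀ t ∈ s, HasDerivAt f 0 t) {x y : ℝ} (hx : x ∈ s) (hy : y ∈ s) : f x = f y := by
  have h := hs.convex.norm_image_sub_le_of_norm_hasDerivWithin_le
    (fun t ht => (hf t ht).hasDerivWithinAt) (fun _ _ => norm_zero.le) hx hy
  rw [zero_mul, norm_le_zero_iff, sub_eq_zero] at h
  exact h.symm

theorem hasDerivAt_mathieuWeight (a q t : ℝ) :
    HasDerivAt (fun s => a + 2 * q * cos (2 * s)) (-(4 * q * sin (2 * t))) t :=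
  (((hasDerivAt_id t).const_mul 2).cos.const_mul (2 * q)).const_add a
    |>.congr_deriv (by simp only [id_eq]; ring)

theorem HasDerivAt.half_sq_div {v w : ℝ → ℝ} {v' w' t : ℝ} (hv : HasDerivAt v v' t)
    (hw : HasDerivAt w w' t) (hw0 : w t ≠ 0) :
    HasDerivAt (fun s => 1 / 2 * (v s ^ 2 / w s)) (v t * (v' - w' / (2 * w t) * v t) / w t) t := by
  refine (((hv.pow 2).div hw hw0).const_mul (1 / 2)).congr_deriv ?_
  simp only [Pi.pow_apply]
  field_simp
  ring

noncomputable def monkeySaddle (x y : ℝ) : ℝ :=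
  (1 / 3) * x ^ 3 - x * y ^ 2 + (x ^ 2 * y - (1 / 3) * y ^ 3)

theorem HasDerivAt.monkeySaddle {x y : ℝ → ℝ} {x' y' t : ℝ} (hx : HasDerivAt x x' t)
    (hy : HasDerivAt y y' t) :
    HasDerivAt (fun s => monkeySaddle (x s) (y s))
      ((x t ^ 2 - y t ^ 2 + 2 * x t * y t) * x' + (x t ^ 2 - y t ^ 2 - 2 * x t * y t) * y') t := by
  unfold _root_.monkeySaddle
  refine ((((hx.pow 3).const_mul (1 / 3)).sub (hx.mul (hy.pow 2))).add
    (((hx.pow 2).mul hy).sub ((hy.pow 3).const_mul (1 / 3)))).congr_deriv ?_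
  simp only [Pi.pow_apply]
  ring

noncomputable def monkeySaddleEnergy (w x y x' y' : ℝ) : ℝ :=
  1 / 2 * (x' ^ 2 / w) - 1 / 2 * (y' ^ 2 / w) + monkeySaddle x y

theorem hasDerivAt_monkeySaddleEnergy_eq_zero {w x y x' y' : ℝ → ℝ} {w' x'' y'' t : ℝ}
    (hw : HasDerivAt w w' t) (hw0 : w t ≠ 0) (hx : HasDerivAt x (x' t) t)
    (hy : HasDerivAt y (y' t) t) (hx' : HasDerivAt x' x'' t) (hy' : HasDerivAt y' y'' t)
    (hx_ode : x'' - w' / (2 * w t) * x' t = -w t * (x t ^ 2 - y t ^ 2 + 2 * x t * y t))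
    (hy_ode : y'' - w' / (2 * w t) * y' t = w t * (x t ^ 2 - y t ^ 2 - 2 * x t * y t)) :
    HasDerivAt (fun s => monkeySaddleEnergy (w s) (x s) (y s) (x' s) (y' s)) 0 t := by
  refine (((hx'.half_sq_div hw hw0).sub (hy'.half_sq_div hw hw0)).add
    (hx.monkeySaddle hy)).congr_deriv ?_
  rw [hx_ode, hy_ode]
  field_simp
  ring

/-- Along any solution of the nonlinear (monkey-saddle) Mathieu–Kapitza
system on an interval J where a + 2q cos 2t > 0, the quantity
I = (1/2)(x′² − y′²)/(a + 2q cos 2t) + ((1/3)x³ − xy²) + (x²y − (1/3)y³) is constant. -/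
theorem nonlinear_mathieu_kapitza_first_integral
    (a q : ℝ) (J : Set ℝ) (hJ : J.OrdConnected)
    (hpos : ∀ t ∈ J, 0 < a + 2 * q * Real.cos (2 * t))
    (x x' x'' y y' y'' : ℝ → ℝ)
    (hx : ∀ t ∈ J, HasDerivAt x (x' t) t)
    (hx' : ∀ t ∈ J, HasDerivAt x' (x'' t) t)
    (hy : ∀ t ∈ J, HasDerivAt y (y' t) t)
    (hy' : ∀ t ∈ J, HasDerivAt y' (y'' t) t)
    (hode1 : ∀ t ∈ J, x'' t
      + (2 * q * Real.sin (2 * t) / (a + 2 * q * Real.cos (2 * t))) * x' t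
      + (a + 2 * q * Real.cos (2 * t)) * ((x t) ^ 2 - (y t) ^ 2 + 2 * x t * y t) = 0)
    (hode2 : ∀ t ∈ J, y'' t
      + (2 * q * Real.sin (2 * t) / (a + 2 * q * Real.cos (2 * t))) * y' t
      - (a + 2 * q * Real.cos (2 * t)) * ((x t) ^ 2 - (y t) ^ 2 - 2 * x t * y t) = 0) :
    ∀ t₁ ∈ J, ∀ t₂ ∈ J,
      (1 / 2) * (((x' t₁) ^ 2 - (y' t₁) ^ 2) / (a + 2 * q * Real.cos (2 * t₁)))
        + ((1 / 3) * (x t₁) ^ 3 - x t₁ * (y t₁) ^ 2)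
        + ((x t₁) ^ 2 * y t₁ - (1 / 3) * (y t₁) ^ 3)
      = (1 / 2) * (((x' t₂) ^ 2 - (y' t₂) ^ 2) / (a + 2 * q * Real.cos (2 * t₂)))
        + ((1 / 3) * (x t₂) ^ 3 - x t₂ * (y t₂) ^ 2)
        + ((x t₂) ^ 2 * y t₂ - (1 / 3) * (y t₂) ^ 3) := by
  intro t₁ ht₁ t₂ ht₂
  have hconst := hJ.eq_of_hasDerivAt_eq_zero_s18 (f := fun t =>
      monkeySaddleEnergy (a + 2 * q * cos (2 * t)) (x t) (y t) (x' t) (y' t)) (fun t ht => by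
    have hw0 := (hpos t ht).ne'
    have hdamping : -(4 * q * sin (2 * t)) / (2 * (a + 2 * q * cos (2 * t)))
        = -(2 * q * sin (2 * t) / (a + 2 * q * cos (2 * t))) := by
      field_simp
      ring
    exact hasDerivAt_monkeySaddleEnergy_eq_zero (hasDerivAt_mathieuWeight a q t) hw0
      (hx t ht) (hy t ht) (hx' t ht) (hy' t ht)
      (by linear_combination hode1 t ht - x' t * hdamping)
      (by linear_combination hode2 t ht - y' t * hdamping)) ht₁ ht₂
  simp only [monkeySaddleEnergy, monkeySaddle] at hconst
  linear_combination hconst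
end

section
/- Let a, b ∈ ℝ with a ≠ 0, let λ ∈ ℂ, and let c₁, c₂ ∈ ℂ with (c₁, c₂) ≠ (0, 0). If the functions x(t) = c₁·exp(λt) and y(t) = c₂·exp(λt) satisfy the Kapitza rotating shaft equations x″(t) + a·y(t) + b·x(t) = 0 and y″(t) − a·x(t) + b·y(t) = 0 for all t ∈ ℝ, then (λ² + b)² + a² = 0; in particular λ² + b is purely imaginary and nonzero, so the system is unstable for every a ≠ 0. -/
/-! Substituting the exponential ansatz turns the system into the linear equations
`μ c₁ = -a c₂`, `μ c₂ = a c₁` with `μ = λ² + b`. A nonzero solution forces the determinant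
`μ² + a²` to vanish, so `μ = ± i a`: purely imaginary, and nonzero as soon as `a ≠ 0`. -/

theorem hasDerivAt_const_mul_cexp_mul_ofReal (c lam : ℂ) (t : ℝ) :
    HasDerivAt (fun t : ℝ => c * Complex.exp (lam * t)) (c * lam * Complex.exp (lam * t)) t := by
  have hlin : HasDerivAt (fun t : ℝ => lam * (t : ℂ)) lam t := by
    simpa using (hasDerivAt_id t).ofReal_comp.const_mul lam
  exact (hlin.cexp.const_mul c).congr_deriv (by ring)

theorem deriv_const_mul_cexp_mul_ofReal (c lam : ℂ) :
    deriv (fun t : ℝ => c * Complex.exp (lam * t)) =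
      fun t : ℝ => c * lam * Complex.exp (lam * t) :=
  funext fun t => (hasDerivAt_const_mul_cexp_mul_ofReal c lam t).deriv

theorem sq_add_sq_eq_zero_of_mul_eq_of_ne_zero {R : Type*} [CommRing R] [NoZeroDivisors R]
    {μ a c₁ c₂ : R} (h₁ : μ * c₁ = -a * c₂) (h₂ : μ * c₂ = a * c₁) (hc : (c₁, c₂) ≠ (0, 0)) :
    μ ^ 2 + a ^ 2 = 0 := by
  have hc₁ : (μ ^ 2 + a ^ 2) * c₁ = 0 := by linear_combination μ * h₁ - a * h₂
  have hc₂ : (μ ^ 2 + a ^ 2) * c₂ = 0 := by linear_combination μ * h₂ + a * h₁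
  by_cases h : c₁ = 0
  · exact (mul_eq_zero.1 hc₂).resolve_right fun h' => hc (by rw [h, h'])
  · exact (mul_eq_zero.1 hc₁).resolve_right h

theorem Complex.re_eq_zero_of_sq_add_ofReal_sq_eq_zero {z : ℂ} {a : ℝ}
    (h : z ^ 2 + (a : ℂ) ^ 2 = 0) : z.re = 0 := by
  have hfac : (z - I * a) * (z + I * a) = 0 := by
    linear_combination h - I_sq * (a : ℂ) ^ 2
  rcases mul_eq_zero.1 hfac with h | h
  · simp [sub_eq_zero.1 h]
  · simp [eq_neg_of_add_eq_zero_left h]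

/-- If the Kapitza rotating shaft equations x″ + a y + b x = 0,
y″ − a x + b y = 0 (with a ≠ 0) admit an exponential solution
x(t) = c₁·exp(λt), y(t) = c₂·exp(λt) with (c₁, c₂) ≠ (0, 0), then
(λ² + b)² + a² = 0; in particular λ² + b is purely imaginary and nonzero,
so the system is unstable for every a ≠ 0. -/
theorem kapitza_shaft_characteristic_equation
    (a b : ℝ) (ha : a ≠ 0) (lam : ℂ) (c₁ c₂ : ℂ) (hc : (c₁, c₂) ≠ (0, 0))
    (x y : ℝ → ℂ)
    (hxdef : x = fun t : ℝ => c₁ * Complex.exp (lam * t))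
    (hydef : y = fun t : ℝ => c₂ * Complex.exp (lam * t))
    (h1 : ∀ t : ℝ, deriv (deriv x) t + (a : ℂ) * y t + (b : ℂ) * x t = 0)
    (h2 : ∀ t : ℝ, deriv (deriv y) t - (a : ℂ) * x t + (b : ℂ) * y t = 0) :
    (lam ^ 2 + (b : ℂ)) ^ 2 + (a : ℂ) ^ 2 = 0
    ∧ (lam ^ 2 + (b : ℂ)).re = 0
    ∧ lam ^ 2 + (b : ℂ) ≠ 0 := by
  subst hxdef hydef
  have hx₀ : c₁ * lam * lam + a * c₂ + b * c₁ = 0 := by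
    simpa only [deriv_const_mul_cexp_mul_ofReal, Complex.ofReal_zero, mul_zero,
      Complex.exp_zero, mul_one] using h1 0
  have hy₀ : c₂ * lam * lam - a * c₁ + b * c₂ = 0 := by
    simpa only [deriv_const_mul_cexp_mul_ofReal, Complex.ofReal_zero, mul_zero,
      Complex.exp_zero, mul_one] using h2 0
  have hchar : (lam ^ 2 + (b : ℂ)) ^ 2 + (a : ℂ) ^ 2 = 0 :=
    sq_add_sq_eq_zero_of_mul_eq_of_ne_zero (by linear_combination hx₀)
      (by linear_combination hy₀) hc
  refine ⟨hchar, Complex.re_eq_zero_of_sq_add_ofReal_sq_eq_zero hchar, fun h0 => ha ?_⟩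
  simpa [h0] using hchar
end
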